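/- Let B = [[α, r], [0, β]] ∈ ℂ^{2×2} with r ≠ 0. Then for every λ ∈ ℂ, the two singular values of λI − B are distinct; equivalently, the two eigenvalues of the Hermitian matrix (λI − B)ᴴ(λI − B) are distinct for every λ ∈ ℂ. (In particular, the matrix B has no fault points.) -/

import Mathlib

open Matrix

/-- The eigenvalues (squares of the singular values) of `λI - B`, i.e. the eigenvalues
of the Hermitian matrix `(λI - B)ᴴ (λI - B)`, counted with multiplicity. -/
noncomputable def sqSingVals {n : ℕ} (B : Matrix (Fin n) (Fin n) ℂ) (lam : ℂ) :
    Fin n → ℝ :=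
  (Matrix.isHermitian_conjTranspose_mul_self
    (lam • (1 : Matrix (Fin n) (Fin n) ℂ) - B)).eigenvalues

/-!
If the two eigenvalues of the Hermitian matrix `MᴴM` coincide, the spectral theorem makes
`MᴴM = c • 1`. For the upper triangular `M = λI - B = [[λ - α, -r], [0, λ - β]]` the off-diagonal
entry `conj (λ - α) * (-r)` must vanish, so `λ = α`; then `c = |λ - α|² = 0`, and the other
diagonal entry `|r|² + |λ - β|² = c = 0` forces `r = 0`.
-/

open scoped ComplexOrder

theorem Matrix.IsHermitian.eq_smul_one_of_eigenvalues_eq {𝕜 n : Type*} [RCLike 𝕜] [Fintype n]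
    [DecidableEq n] {A : Matrix n n 𝕜} (hA : A.IsHermitian) {c : ℝ}
    (h : ∀ i, hA.eigenvalues i = c) : A = (c : 𝕜) • 1 := by
  have hdiag : diagonal (RCLike.ofReal ∘ hA.eigenvalues) = algebraMap 𝕜 (Matrix n n 𝕜) c := by
    rw [algebraMap_eq_diagonal]
    congr 1
    ext i
    simp [h]
  rw [hA.spectral_theorem, hdiag, AlgHomClass.commutes, Algebra.algebraMap_eq_smul_one]

theorem Matrix.upper_fin_two_offDiag_eq_zero_of_conjTranspose_mul_self_eq_smul_one
    {𝕜 : Type*} [RCLike 𝕜] {a b d c : 𝕜}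
    (h : !![a, b; 0, d]ᴴ * !![a, b; 0, d] = c • 1) : b = 0 := by
  have h00 : star a * a = c := by simpa [mul_apply, Fin.sum_univ_two] using congrFun₂ h 0 0
  have h01 : star a * b = 0 := by simpa [mul_apply, Fin.sum_univ_two] using congrFun₂ h 0 1
  have h11 : star b * b + star d * d = c := by
    simpa [mul_apply, Fin.sum_univ_two] using congrFun₂ h 1 1
  by_contra hb
  have ha : a = 0 := by simpa [hb] using h01
  rw [← h00, ha, star_zero, zero_mul] at h11
  have hbd := (add_eq_zero_iff_of_nonneg (star_mul_self_nonneg b) (star_mul_self_nonneg d)).1 h11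
  exact hb ((CStarRing.star_mul_self_eq_zero_iff b).1 hbd.1)

/-- For `B = [[α, r], [0, β]]` with `r ≠ 0`, the two singular values of `λI - B` are
distinct for every `λ ∈ ℂ`: the two eigenvalues of `(λI - B)ᴴ (λI - B)` differ.
(In particular `B` has no fault points.) -/
theorem two_by_two_triangular_no_fault_points
    (α β r : ℂ) (hr : r ≠ 0) :
    ∀ lam : ℂ, sqSingVals !![α, r; 0, β] lam 0 ≠ sqSingVals !![α, r; 0, β] lam 1 := by
  intro lam h
  have hM : lam • 1 - !![α, r; 0, β] = !![lam - α, -r; 0, lam - β] := by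
    ext i j
    fin_cases i <;> fin_cases j <;> simp
  have hA := isHermitian_conjTranspose_mul_self (lam • 1 - !![α, r; 0, β])
  have hgram := hA.eq_smul_one_of_eigenvalues_eq (c := sqSingVals !![α, r; 0, β] lam 0)
    fun i => by fin_cases i <;> [rfl; exact h.symm]
  rw [hM] at hgram
  exact hr (neg_eq_zero.mp
    (upper_fin_two_offDiag_eq_zero_of_conjTranspose_mul_self_eq_smul_one hgram))
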